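/- arXiv:1712.10239 — 8 statements merged into one kernel-verified Lean document; each statement's English description precedes it below -/
import Mathlib

section
/- For all complex numbers u and v, one has |Im[(u·log|u|² − v·log|v|²)·conj(u − v)]| ≤ 2|u − v|². -/
/-!
Writing `a = log ‖u‖²`, `b = log ‖v‖²`, the imaginary part equals `(b - a) · Im (u · conj v)`,
since `u · conj u` and `v · conj v` are real. Now `|Im (u · conj v)| ≤ min ‖u‖ ‖v‖ · ‖u - v‖`,
while `log x ≤ x - 1` gives `min ‖u‖ ‖v‖ · |b - a| ≤ 2 |‖v‖ - ‖u‖| ≤ 2 ‖u - v‖`.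
-/

open Complex ComplexConjugate

namespace Real

theorem min_mul_abs_log_sub_log_le {a b : ℝ} (ha : 0 ≤ a) (hb : 0 ≤ b) :
    min a b * |log b - log a| ≤ |b - a| := by
  wlog hab : a ≤ b generalizing a b
  · simpa only [min_comm, abs_sub_comm] using this hb ha (le_of_not_ge hab)
  rw [min_eq_left hab, abs_of_nonneg (sub_nonneg.mpr hab)]
  rcases ha.eq_or_lt with rfl | ha
  · simpa using hb
  have hb : 0 < b := ha.trans_le hab
  have hlog : log b - log a ≤ b / a - 1 := by
    rw [← log_div hb.ne' ha.ne']
    exact log_le_sub_one_of_pos (div_pos hb ha)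
  calc a * |log b - log a| = a * (log b - log a) := by
        rw [abs_of_nonneg (sub_nonneg.mpr (log_le_log ha hab))]
    _ ≤ a * (b / a - 1) := mul_le_mul_of_nonneg_left hlog ha.le
    _ = b - a := by field_simp

end Real

namespace Complex

theorem im_mul_sub_mul_mul_conj_sub (u v : ℂ) (a b : ℝ) :
    ((u * a - v * b) * conj (u - v)).im = (b - a) * (u * conj v).im := by
  simp only [mul_im, mul_re, sub_re, sub_im, conj_re, conj_im, ofReal_re, ofReal_im]
  ring

theorem abs_im_mul_conj_le_norm_mul_norm_sub (u v : ℂ) : |(u * conj v).im| ≤ ‖u‖ * ‖u - v‖ := by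
  have him : (u * conj v).im = -(u * conj (u - v)).im := by
    simp only [mul_im, sub_re, sub_im, conj_re, conj_im]
    ring
  rw [him, abs_neg, ← norm_conj (u - v), ← norm_mul]
  exact abs_im_le_norm _

theorem abs_im_mul_conj_le_min_mul_norm_sub (u v : ℂ) :
    |(u * conj v).im| ≤ min ‖u‖ ‖v‖ * ‖u - v‖ := by
  rw [min_mul_of_nonneg _ _ (norm_nonneg _)]
  refine le_min (abs_im_mul_conj_le_norm_mul_norm_sub u v) ?_
  rw [← conj_conj u, ← map_mul, conj_im, abs_neg, conj_conj, mul_comm, norm_sub_rev]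
  exact abs_im_mul_conj_le_norm_mul_norm_sub v u

end Complex

theorem log_nonlinearity_monotone_estimate (u v : ℂ) :
    |((u * (Real.log (‖u‖ ^ 2) : ℂ) - v * (Real.log (‖v‖ ^ 2) : ℂ)) *
        (starRingEnd ℂ) (u - v)).im| ≤ 2 * ‖u - v‖ ^ 2 := by
  rw [im_mul_sub_mul_mul_conj_sub, abs_mul, Real.log_pow, Real.log_pow, ← mul_sub, abs_mul,
    Nat.cast_ofNat, abs_two]
  calc 2 * |Real.log ‖v‖ - Real.log ‖u‖| * |(u * conj v).im|
      ≤ 2 * |Real.log ‖v‖ - Real.log ‖u‖| * (min ‖u‖ ‖v‖ * ‖u - v‖) := by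
        gcongr; exact abs_im_mul_conj_le_min_mul_norm_sub u v
    _ = 2 * (min ‖u‖ ‖v‖ * |Real.log ‖v‖ - Real.log ‖u‖|) * ‖u - v‖ := by ring
    _ ≤ 2 * |‖v‖ - ‖u‖| * ‖u - v‖ := by
        gcongr; exact Real.min_mul_abs_log_sub_log_le (norm_nonneg u) (norm_nonneg v)
    _ ≤ 2 * ‖u - v‖ * ‖u - v‖ := by
        gcongr; rw [norm_sub_rev]; exact abs_norm_sub_norm_le v u
    _ = 2 * ‖u - v‖ ^ 2 := by ring
end

section
/- Let f : [0,∞) → ℝ be monotone nondecreasing with f(0) = 0, and extend f to the complex plane by setting F(z) = (z/|z|)·f(|z|) for z ≠ 0 and F(0) = 0. Then for all complex numbers z₁ and z₂, Re[(F(z₁) − F(z₂))·conj(z₁ − z₂)] ≥ 0. -/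
/-!
Write `F z = (f |z| / |z|) z`. Since `f ≥ 0` on `[0, ∞)`, both radial factors are nonnegative, so
Cauchy–Schwarz bounds the cross term `Re (z₁ conj z₂)` by `|z₁| |z₂|`; this leaves
`(f |z₁| - f |z₂|) (|z₁| - |z₂|)`, which is nonnegative because `f` is nondecreasing.
-/

open Set RealInnerProductSpace

section RadialMap

variable {E : Type*} [NormedAddCommGroup E] [InnerProductSpace ℝ E]

/-- At `x = 0` this is `0`, since `f 0 / 0 = 0`. -/
noncomputable def radialMap (f : ℝ → ℝ) (x : E) : E := (f ‖x‖ / ‖x‖) • x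

lemma mul_sub_mul_mul_sub_le_inner_smul_sub_smul {a b : ℝ} (ha : 0 ≤ a) (hb : 0 ≤ b) (x y : E) :
    (a * ‖x‖ - b * ‖y‖) * (‖x‖ - ‖y‖) ≤ ⟪a • x - b • y, x - y⟫ := by
  have hxy : ⟪x, y⟫ ≤ ‖x‖ * ‖y‖ := real_inner_le_norm x y
  have hexpand : ⟪a • x - b • y, x - y⟫ = a * ‖x‖ ^ 2 + b * ‖y‖ ^ 2 - (a + b) * ⟪x, y⟫ := by
    simp only [inner_sub_left, inner_sub_right, real_inner_smul_left, real_inner_self_eq_norm_sq,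
      real_inner_comm x y]
    ring
  rw [hexpand]
  nlinarith [mul_le_mul_of_nonneg_left hxy (add_nonneg ha hb)]

lemma MonotoneOn.div_mul_self {f : ℝ → ℝ} (hf : MonotoneOn f (Ici 0)) (hf0 : 0 ≤ f 0) :
    MonotoneOn (fun r ↦ f r / r * r) (Ici 0) := by
  intro r hr s hs hrs
  rcases (mem_Ici.mp hr).eq_or_lt with rfl | hr_pos
  · have hfs : 0 ≤ f s := hf0.trans (hf hr hs (mem_Ici.mp hs))
    simpa using mul_nonneg (div_nonneg hfs (mem_Ici.mp hs)) (mem_Ici.mp hs)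
  · simp only [div_mul_cancel₀ _ hr_pos.ne', div_mul_cancel₀ _ (hr_pos.trans_le hrs).ne']
    exact hf hr hs hrs

lemma MonotoneOn.mul_sub_nonneg {g : ℝ → ℝ} {s : Set ℝ} (hg : MonotoneOn g s) {x y : ℝ}
    (hx : x ∈ s) (hy : y ∈ s) : 0 ≤ (g x - g y) * (x - y) := by
  rcases le_total x y with hxy | hyx
  · exact mul_nonneg_of_nonpos_of_nonpos (sub_nonpos.mpr (hg hx hy hxy)) (sub_nonpos.mpr hxy)
  · exact mul_nonneg (sub_nonneg.mpr (hg hy hx hyx)) (sub_nonneg.mpr hyx)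

theorem MonotoneOn.inner_radialMap_sub_nonneg {f : ℝ → ℝ} (hf : MonotoneOn f (Ici 0))
    (hf0 : 0 ≤ f 0) (x y : E) : 0 ≤ ⟪radialMap f x - radialMap f y, x - y⟫ := by
  have hcoeff : ∀ r : ℝ, 0 ≤ r → 0 ≤ f r / r := fun r hr ↦
    div_nonneg (hf0.trans (hf self_mem_Ici hr hr)) hr
  calc 0 ≤ (f ‖x‖ / ‖x‖ * ‖x‖ - f ‖y‖ / ‖y‖ * ‖y‖) * (‖x‖ - ‖y‖) :=
        (hf.div_mul_self hf0).mul_sub_nonneg (norm_nonneg x) (norm_nonneg y)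
    _ ≤ _ := mul_sub_mul_mul_sub_le_inner_smul_sub_smul
        (hcoeff _ (norm_nonneg x)) (hcoeff _ (norm_nonneg y)) x y

end RadialMap

theorem damping_monotonicity (f : ℝ → ℝ) (hf : MonotoneOn f (Set.Ici 0)) (hf0 : f 0 = 0)
    (F : ℂ → ℂ) (hF : ∀ z : ℂ, z ≠ 0 → F z = (z / (‖z‖ : ℂ)) * (f ‖z‖ : ℂ))
    (hF0 : F 0 = 0) (z₁ z₂ : ℂ) :
    0 ≤ ((F z₁ - F z₂) * (starRingEnd ℂ) (z₁ - z₂)).re := by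
  have hF_radial : F = radialMap f := by
    funext z
    rcases eq_or_ne z 0 with rfl | hz
    · simp [hF0, radialMap]
    · rw [hF z hz, radialMap, Complex.real_smul]
      push_cast
      ring
  rw [← Complex.inner, real_inner_comm, hF_radial]
  exact hf.inner_radialMap_sub_nonneg hf0.ge z₁ z₂
end

section
/- Let f : [0,∞) → ℝ be monotone nondecreasing with f(0) = 0, and extend f to the complex plane by setting F(z) = (z/|z|)·f(|z|) for z ≠ 0 and F(0) = 0. Then for all nonzero complex numbers z₁ and z₂, Re[(F(z₁) − F(z₂))·conj(z₁ − z₂)] ≥ (f(|z₁|) − f(|z₂|))·(|z₁| − |z₂|). -/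
/-!
The right-hand side is the real inner product `⟪F z₁ - F z₂, z₁ - z₂⟫` with `F z = (f ‖z‖ / ‖z‖) • z`.
Expanding it, the difference between the two sides is
`(f ‖z₁‖ / ‖z₁‖ + f ‖z₂‖ / ‖z₂‖) * (‖z₁‖ * ‖z₂‖ - ⟪z₁, z₂⟫)`, which is nonnegative by
Cauchy–Schwarz because `f ≥ 0` on `[0, ∞)`.
-/

open RealInnerProductSpace

theorem sub_mul_sub_norm_le_inner_div_norm_smul_sub {E : Type*} [NormedAddCommGroup E]
    [InnerProductSpace ℝ E] {x y : E} (hx : x ≠ 0) (hy : y ≠ 0) {a b : ℝ} (ha : 0 ≤ a)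
    (hb : 0 ≤ b) :
    (a - b) * (‖x‖ - ‖y‖) ≤ ⟪(a / ‖x‖) • x - (b / ‖y‖) • y, x - y⟫ := by
  have hx' : 0 < ‖x‖ := norm_pos_iff.mpr hx
  have hy' : 0 < ‖y‖ := norm_pos_iff.mpr hy
  have hcs : ⟪x, y⟫ ≤ ‖x‖ * ‖y‖ := real_inner_le_norm x y
  have hexpand : ⟪(a / ‖x‖) • x - (b / ‖y‖) • y, x - y⟫
      = a * ‖x‖ + b * ‖y‖ - (a / ‖x‖ + b / ‖y‖) * ⟪x, y⟫ := by
    simp only [inner_sub_left, inner_sub_right, real_inner_smul_left, real_inner_self_eq_norm_sq,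
      real_inner_comm x y]
    field_simp
    ring
  have hcoef : 0 ≤ a / ‖x‖ + b / ‖y‖ := by positivity
  calc (a - b) * (‖x‖ - ‖y‖) = a * ‖x‖ + b * ‖y‖ - (a / ‖x‖ + b / ‖y‖) * (‖x‖ * ‖y‖) := by
        field_simp
        ring
    _ ≤ _ := by rw [hexpand]; gcongr

theorem damping_monotonicity_key_inequality_general (f : ℝ → ℝ) (hf : MonotoneOn f (Set.Ici 0))
    (hf0 : f 0 = 0) (F : ℂ → ℂ)
    (hF : ∀ z : ℂ, z ≠ 0 → F z = (z / (‖z‖ : ℂ)) * (f ‖z‖ : ℂ))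
    (z₁ z₂ : ℂ) (hz₁ : z₁ ≠ 0) (hz₂ : z₂ ≠ 0) :
    (f ‖z₁‖ - f ‖z₂‖) * (‖z₁‖ - ‖z₂‖) ≤
      ((F z₁ - F z₂) * (starRingEnd ℂ) (z₁ - z₂)).re := by
  have hf_nonneg (z : ℂ) : 0 ≤ f ‖z‖ :=
    hf0 ▸ hf Set.self_mem_Ici (norm_nonneg z) (norm_nonneg z)
  have hF_smul (z : ℂ) (hz : z ≠ 0) : F z = (f ‖z‖ / ‖z‖) • z := by
    rw [hF z hz, Complex.real_smul]
    push_cast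
    ring
  rw [← Complex.inner, real_inner_comm, hF_smul z₁ hz₁, hF_smul z₂ hz₂]
  exact sub_mul_sub_norm_le_inner_div_norm_smul_sub hz₁ hz₂ (hf_nonneg z₁) (hf_nonneg z₂)

theorem damping_monotonicity_key_inequality (f : ℝ → ℝ) (hf : MonotoneOn f (Set.Ici 0))
    (hf0 : f 0 = 0) (F : ℂ → ℂ)
    (hF : ∀ z : ℂ, z ≠ 0 → F z = (z / (‖z‖ : ℂ)) * (f ‖z‖ : ℂ))
    (hF0 : F 0 = 0) (z₁ z₂ : ℂ) (hz₁ : z₁ ≠ 0) (hz₂ : z₂ ≠ 0) :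
    (f ‖z₁‖ - f ‖z₂‖) * (‖z₁‖ - ‖z₂‖) ≤
      ((F z₁ - F z₂) * (starRingEnd ℂ) (z₁ - z₂)).re :=
  damping_monotonicity_key_inequality_general f hf hf0 F hF z₁ z₂ hz₁ hz₂
end

section
/- Define the real function a on [0,∞) by a(0) = 0, a(x) = −x·log(x²) for 0 < x ≤ e^{−3}, and a(x) = 3x + 4e^{−3} − e^{−6}/x for x ≥ e^{−3}; extend it to the complex plane by A(z) = (z/|z|)·a(|z|) for z ≠ 0 and A(0) = 0. For each positive integer n define a_n : ℂ → ℂ by a_n(z) = A(z) if |z| ≥ 1/n and a_n(z) = n·a(1/n)·z if |z| ≤ 1/n. Then there exists a constant C > 0, independent of n, such that for all positive integers n and all complex numbers u and v, |Im[(a_n(u) − a_n(v))·conj(u − v)]| ≤ C·|u − v|². -/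
/-!
Write `g r = a r / r`. Then `a_n z = g (max |z| (1/n)) z`, a radial field `φ(|z|) z` with real `φ`.
For such fields `Im[(φ(|u|) u - φ(|v|) v) conj(u - v)] = (φ(|v|) - φ(|u|)) Im(u conj v)`, and
`|Im(u conj v)| ≤ |u - v| |v|`, so the estimate holds with constant `C` as soon as
`|φ r - φ s| ≤ C (r - s) / s` for `0 < s ≤ r`. This holds for `g` with `C = 2`: below `e⁻³`,
`g r = -2 log r` and `log (r / s) ≤ r / s - 1`; above `E = e⁻³`, `g r = 3 + 4E/r - E²/r²` is an
explicit rational function. Truncating `g` at `1/n` only shrinks `r - s` and enlarges `s`.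
-/

open Set ComplexConjugate

def RatioLipschitzOn (L : ℝ) (φ : ℝ → ℝ) (S : Set ℝ) : Prop :=
  ∀ s ∈ S, ∀ r ∈ S, s ≤ r → |φ r - φ s| ≤ L * (r - s) / s

namespace RatioLipschitzOn

variable {L : ℝ} {φ : ℝ → ℝ} {S T : Set ℝ}

theorem mono (h : RatioLipschitzOn L φ T) (hST : S ⊆ T) : RatioLipschitzOn L φ S :=
  fun s hs r hr hsr => h s (hST hs) r (hST hr) hsr

theorem union_Ioc_Ici {E : ℝ} (hL : 0 ≤ L) (h₁ : RatioLipschitzOn L φ (Ioc 0 E))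
    (h₂ : RatioLipschitzOn L φ (Ici E)) : RatioLipschitzOn L φ (Ioi 0) := by
  intro s (hs : 0 < s) r (hr : 0 < r) hsr
  rcases le_total r E with hrE | hEr
  · exact h₁ s ⟨hs, hsr.trans hrE⟩ r ⟨hr, hrE⟩ hsr
  rcases le_total E s with hEs | hsE
  · exact h₂ s hEs r (hEs.trans hsr) hsr
  have hE : 0 < E := hs.trans_le hsE
  calc |φ r - φ s| ≤ |φ r - φ E| + |φ E - φ s| := abs_sub_le _ _ _
    _ ≤ L * (r - E) / E + L * (E - s) / s :=
        add_le_add (h₂ E self_mem_Ici r hEr hEr) (h₁ s ⟨hs, hsE⟩ E ⟨hE, le_rfl⟩ hsE)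
    _ ≤ L * (r - E) / s + L * (E - s) / s := by gcongr
    _ = L * (r - s) / s := by ring

theorem comp_max {c : ℝ} (hL : 0 ≤ L) (h : RatioLipschitzOn L φ (Ici c)) :
    RatioLipschitzOn L (fun r => φ (max r c)) (Ioi 0) := by
  intro s (hs : 0 < s) r _ hsr
  have hmax : max s c ≤ max r c := max_le_max_right c hsr
  calc |φ (max r c) - φ (max s c)| ≤ L * (max r c - max s c) / max s c :=
        h _ (le_max_right s c) _ (le_max_right r c) hmax
    _ ≤ L * (r - s) / s := by
        have hgap : max r c - max s c ≤ r - s :=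
          (max_sub_max_le_max r c s c).trans (max_le le_rfl (by linarith))
        exact div_le_div₀ (mul_nonneg hL (sub_nonneg.2 hsr))
          (mul_le_mul_of_nonneg_left hgap hL) hs (le_max_left s c)

end RatioLipschitzOn

theorem im_ofReal_mul_sub_ofReal_mul_conj (p q : ℝ) (u v : ℂ) :
    (((p : ℂ) * u - q * v) * conj (u - v)).im = (q - p) * (u * conj v).im := by
  simp only [Complex.mul_im, Complex.mul_re, Complex.sub_re, Complex.sub_im, Complex.conj_re,
    Complex.conj_im, Complex.ofReal_re, Complex.ofReal_im]
  ring

theorem abs_im_mul_conj_le (u v : ℂ) : |(u * conj v).im| ≤ ‖u - v‖ * ‖v‖ := by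
  have hvv : (v * conj v).im = 0 := by simp [Complex.mul_conj]
  calc |(u * conj v).im| = |((u - v) * conj v).im| := by
        rw [sub_mul, Complex.sub_im, hvv, sub_zero]
    _ ≤ ‖(u - v) * conj v‖ := Complex.abs_im_le_norm _
    _ = ‖u - v‖ * ‖v‖ := by rw [norm_mul, Complex.norm_conj]

theorem RatioLipschitzOn.abs_im_radial_sub_mul_conj_le {L : ℝ} {φ : ℝ → ℝ} (hL : 0 ≤ L)
    (h : RatioLipschitzOn L φ (Ioi 0)) (u v : ℂ) :
    |(((φ ‖u‖ : ℂ) * u - (φ ‖v‖ : ℂ) * v) * conj (u - v)).im| ≤ L * ‖u - v‖ ^ 2 := by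
  wlog hvu : ‖v‖ ≤ ‖u‖ generalizing u v
  · have hswap : ((φ ‖u‖ : ℂ) * u - (φ ‖v‖ : ℂ) * v) * conj (u - v) =
        ((φ ‖v‖ : ℂ) * v - (φ ‖u‖ : ℂ) * u) * conj (v - u) := by
      rw [map_sub, map_sub]; ring
    rw [hswap, norm_sub_rev u v]
    exact this v u (le_of_not_ge hvu)
  rw [im_ofReal_mul_sub_ofReal_mul_conj, abs_mul]
  rcases (norm_nonneg v).eq_or_lt with hv | hv
  · rw [norm_eq_zero.1 hv.symm, map_zero, mul_zero, Complex.zero_im, abs_zero, mul_zero]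
    positivity
  have hnorm : ‖u‖ - ‖v‖ ≤ ‖u - v‖ := norm_sub_norm_le u v
  calc |φ ‖v‖ - φ ‖u‖| * |(u * conj v).im|
      ≤ L * (‖u‖ - ‖v‖) / ‖v‖ * (‖u - v‖ * ‖v‖) := by
        rw [abs_sub_comm]
        exact mul_le_mul (h _ hv _ (hv.trans_le hvu) hvu) (abs_im_mul_conj_le u v)
          (abs_nonneg _) (div_nonneg (mul_nonneg hL (sub_nonneg.2 hvu)) hv.le)
    _ = L * (‖u‖ - ‖v‖) * ‖u - v‖ := by field_simp
    _ ≤ L * ‖u - v‖ * ‖u - v‖ := by gcongr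
    _ = L * ‖u - v‖ ^ 2 := by ring

section Profile

variable {a : ℝ → ℝ}

theorem ratioLipschitzOn_div_self_Ioc
    (ha1 : ∀ x : ℝ, 0 < x → x ≤ Real.exp (-3) → a x = -x * Real.log (x ^ 2)) :
    RatioLipschitzOn 2 (fun r => a r / r) (Ioc 0 (Real.exp (-3))) := by
  intro s ⟨hs, hsE⟩ r ⟨hr, hrE⟩ hsr
  have hg : ∀ x, 0 < x → x ≤ Real.exp (-3) → a x / x = -(2 * Real.log x) := by
    intro x hx hxE
    rw [ha1 x hx hxE, Real.log_pow]
    field_simp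
    push_cast
    ring
  have hlog : Real.log r - Real.log s ≤ (r - s) / s := by
    rw [← Real.log_div hr.ne' hs.ne']
    calc Real.log (r / s) ≤ r / s - 1 := Real.log_le_sub_one_of_pos (by positivity)
      _ = (r - s) / s := by field_simp
  show |a r / r - a s / s| ≤ _
  rw [hg r hr hrE, hg s hs hsE, abs_sub_comm,
    abs_of_nonneg (by linarith [Real.log_le_log hs hsr]), mul_div_assoc]
  linarith

theorem ratioLipschitzOn_div_self_Ici
    (ha2 : ∀ x : ℝ, Real.exp (-3) ≤ x → a x = 3 * x + 4 * Real.exp (-3) - Real.exp (-6) / x) :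
    RatioLipschitzOn 2 (fun r => a r / r) (Ici (Real.exp (-3))) := by
  intro s (hEs : _ ≤ s) r (hEr : _ ≤ r) hsr
  set E := Real.exp (-3)
  have hE : 0 < E := Real.exp_pos _
  have hs : 0 < s := hE.trans_le hEs
  have hr : 0 < r := hs.trans_le hsr
  have hE6 : Real.exp (-6) = E ^ 2 := by rw [← Real.exp_nat_mul]; norm_num
  have hdiff : a r / r - a s / s =
      (r - s) * (E ^ 2 * (r + s) - 4 * E * (r * s)) / (r ^ 2 * s ^ 2) := by
    rw [ha2 r hEr, ha2 s hEs, hE6]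
    field_simp
    ring
  have hnum : |E ^ 2 * (r + s) - 4 * E * (r * s)| ≤ 2 * (r ^ 2 * s) := by
    rw [abs_le]
    constructor
    · -- 2 r² s - 4 E r s + E² (r + s) = s (2r - s)(r - s) + (s - E)(4rs - (r + s)(E + s))
      have h2rs : (0 : ℝ) ≤ 2 * r - s := by linarith
      nlinarith [mul_nonneg (mul_nonneg hs.le h2rs) (sub_nonneg.2 hsr),
        mul_nonneg (sub_nonneg.2 hEs) (mul_nonneg hs.le (sub_nonneg.2 hsr)),
        mul_nonneg (sub_nonneg.2 hEs) (mul_nonneg (sub_nonneg.2 hEs) (add_pos hr hs).le)]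
    · have hE2 : E ^ 2 * (r + s) ≤ s ^ 2 * (r + s) :=
        mul_le_mul_of_nonneg_right (pow_le_pow_left₀ hE.le hEs 2) (by positivity)
      nlinarith [mul_pos hE (mul_pos hr hs),
        mul_nonneg (mul_nonneg hs.le hr.le) (sub_nonneg.2 hsr),
        mul_nonneg (mul_nonneg hs.le hs.le) (sub_nonneg.2 hsr)]
  show |a r / r - a s / s| ≤ _
  rw [hdiff, abs_div, abs_mul, abs_of_nonneg (sub_nonneg.2 hsr),
    abs_of_pos (show 0 < r ^ 2 * s ^ 2 by positivity),
    div_le_div_iff₀ (by positivity) hs]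
  calc (r - s) * |E ^ 2 * (r + s) - 4 * E * (r * s)| * s ≤ (r - s) * (2 * (r ^ 2 * s)) * s := by
        gcongr
    _ = 2 * (r - s) * (r ^ 2 * s ^ 2) := by ring

theorem ratioLipschitzOn_div_self
    (ha1 : ∀ x : ℝ, 0 < x → x ≤ Real.exp (-3) → a x = -x * Real.log (x ^ 2))
    (ha2 : ∀ x : ℝ, Real.exp (-3) ≤ x → a x = 3 * x + 4 * Real.exp (-3) - Real.exp (-6) / x) :
    RatioLipschitzOn 2 (fun r => a r / r) (Ioi 0) :=
  RatioLipschitzOn.union_Ioc_Ici zero_le_two (ratioLipschitzOn_div_self_Ioc ha1)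
    (ratioLipschitzOn_div_self_Ici ha2)

end Profile

theorem eq_ofReal_div_self_max_mul {a : ℝ → ℝ} {A f : ℂ → ℂ} {c : ℝ} (hc : 0 ≤ c)
    (hA : ∀ z : ℂ, z ≠ 0 → A z = (z / (‖z‖ : ℂ)) * (a (‖z‖) : ℂ))
    (hf₁ : ∀ z : ℂ, c ≤ ‖z‖ → f z = A z) (hf₂ : ∀ z : ℂ, ‖z‖ ≤ c → f z = (a c / c : ℝ) * z)
    (z : ℂ) : f z = (a (max ‖z‖ c) / max ‖z‖ c : ℝ) * z := by
  rcases le_or_gt ‖z‖ c with hzc | hcz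
  · rw [hf₂ z hzc, max_eq_right hzc]
  have hz : ‖z‖ ≠ 0 := (hc.trans_lt hcz).ne'
  rw [hf₁ z hcz.le, hA z (norm_ne_zero_iff.1 hz), max_eq_left hcz.le]
  push_cast
  field_simp

theorem truncated_a_monotone_estimate_general (a : ℝ → ℝ)
    (ha1 : ∀ x : ℝ, 0 < x → x ≤ Real.exp (-3) → a x = -x * Real.log (x ^ 2))
    (ha2 : ∀ x : ℝ, Real.exp (-3) ≤ x → a x = 3 * x + 4 * Real.exp (-3) - Real.exp (-6) / x)
    (A : ℂ → ℂ)
    (hA : ∀ z : ℂ, z ≠ 0 → A z = (z / (‖z‖ : ℂ)) * (a (‖z‖) : ℂ))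
    (an : ℕ → ℂ → ℂ)
    (han1 : ∀ (n : ℕ) (z : ℂ), 1 / (n : ℝ) ≤ ‖z‖ → an n z = A z)
    (han2 : ∀ (n : ℕ) (z : ℂ), ‖z‖ ≤ 1 / (n : ℝ) →
      an n z = ((n : ℂ) * (a (1 / (n : ℝ)) : ℂ)) * z) :
    ∃ C : ℝ, 0 < C ∧ ∀ (n : ℕ), 0 < n → ∀ u v : ℂ,
      |((an n u - an n v) * (starRingEnd ℂ) (u - v)).im| ≤ C * ‖u - v‖ ^ 2 := by
  refine ⟨2, two_pos, fun n hn u v => ?_⟩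
  have hc : (0 : ℝ) < 1 / n := by positivity
  have hrep := eq_ofReal_div_self_max_mul hc.le hA (han1 n) fun z hz => by
    rw [han2 n z hz]
    push_cast
    field_simp
  rw [hrep u, hrep v]
  have hprofile := (ratioLipschitzOn_div_self ha1 ha2).mono (Ici_subset_Ioi.2 hc)
  exact (hprofile.comp_max zero_le_two).abs_im_radial_sub_mul_conj_le zero_le_two u v

theorem truncated_a_monotone_estimate (a : ℝ → ℝ) (ha0 : a 0 = 0)
    (ha1 : ∀ x : ℝ, 0 < x → x ≤ Real.exp (-3) → a x = -x * Real.log (x ^ 2))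
    (ha2 : ∀ x : ℝ, Real.exp (-3) ≤ x → a x = 3 * x + 4 * Real.exp (-3) - Real.exp (-6) / x)
    (A : ℂ → ℂ) (hA0 : A 0 = 0)
    (hA : ∀ z : ℂ, z ≠ 0 → A z = (z / (‖z‖ : ℂ)) * (a (‖z‖) : ℂ))
    (an : ℕ → ℂ → ℂ)
    (han1 : ∀ (n : ℕ) (z : ℂ), 1 / (n : ℝ) ≤ ‖z‖ → an n z = A z)
    (han2 : ∀ (n : ℕ) (z : ℂ), ‖z‖ ≤ 1 / (n : ℝ) →
      an n z = ((n : ℂ) * (a (1 / (n : ℝ)) : ℂ)) * z) :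
    ∃ C : ℝ, 0 < C ∧ ∀ (n : ℕ), 0 < n → ∀ u v : ℂ,
      |((an n u - an n v) * (starRingEnd ℂ) (u - v)).im| ≤ C * ‖u - v‖ ^ 2 :=
  truncated_a_monotone_estimate_general a ha1 ha2 A hA an han1 han2
end

section
/- Define the real function a on [0,∞) by a(0) = 0, a(x) = −x·log(x²) for 0 < x ≤ e^{−3}, and a(x) = 3x + 4e^{−3} − e^{−6}/x for x ≥ e^{−3}; extend it to the complex plane by A(z) = (z/|z|)·a(|z|) for z ≠ 0 and A(0) = 0. For a positive integer n define a_n : ℂ → ℂ by a_n(z) = A(z) if |z| ≥ 1/n and a_n(z) = n·a(1/n)·z if |z| ≤ 1/n. Then for every integer n ≥ 21 (so that 1/n < e^{−3}) and every complex number z, |a_n(z) − A(z)| ≤ (4·log n)/n. -/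
/-! On the disc `‖z‖ ≤ 1/n` both `a_n` and `A` have modulus at most `a(1/n) = 2 log n / n`:
`a_n` because it is linear there, `A` because `a(x) = -2 x log x` is increasing on `(0, e⁻¹]`.
Outside the disc the two functions agree. -/

open Real Set

theorem Real.monotoneOn_negMulLog : MonotoneOn negMulLog (Icc 0 (exp (-1))) := by
  refine monotoneOn_of_deriv_nonneg (convex_Icc _ _) continuous_negMulLog.continuousOn
    (differentiableOn_negMulLog.mono fun x hx ↦ by rw [interior_Icc] at hx; exact hx.1.ne')
    fun x hx ↦ ?_
  rw [interior_Icc] at hx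
  rw [deriv_negMulLog hx.1.ne']
  have : log x ≤ -1 := by rw [← log_exp (-1)]; exact log_le_log hx.1 hx.2.le
  linarith

theorem Real.abs_negMulLog_le {r s : ℝ} (hr : 0 ≤ r) (hrs : r ≤ s) (hs : s ≤ exp (-1)) :
    |negMulLog r| ≤ negMulLog s := by
  have hs1 : s ≤ 1 := hs.trans (exp_le_one_iff.2 (by norm_num))
  rw [abs_of_nonneg (negMulLog_nonneg hr (hrs.trans hs1))]
  exact monotoneOn_negMulLog ⟨hr, hrs.trans hs⟩ ⟨hr.trans hrs, hs⟩ hrs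

theorem Real.neg_mul_log_sq (x : ℝ) : -x * log (x ^ 2) = 2 * negMulLog x := by
  rw [log_pow, negMulLog]; push_cast; ring

theorem Real.negMulLog_inv_natCast (n : ℕ) : negMulLog (1 / n) = log n / n := by
  simp [negMulLog, log_inv, div_eq_inv_mul]

theorem Real.exp_three_lt_21 : exp 3 < 21 := by
  rw [show exp 3 = exp 1 ^ 3 by rw [← exp_nat_mul]; norm_num]
  calc exp 1 ^ 3 < 2.7182818286 ^ 3 := by gcongr; exact exp_one_lt_d9
    _ < 21 := by norm_num

theorem one_div_natCast_le_exp_neg_three {n : ℕ} (hn : 21 ≤ n) : 1 / (n : ℝ) ≤ exp (-3) := by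
  have : (21 : ℝ) ≤ n := by exact_mod_cast hn
  rw [exp_neg, one_div]
  exact inv_anti₀ (exp_pos 3) (by linarith [exp_three_lt_21])

theorem Complex.norm_div_norm_mul_ofReal {z : ℂ} (hz : z ≠ 0) (t : ℝ) :
    ‖z / (‖z‖ : ℂ) * (t : ℂ)‖ = |t| := by
  simp [hz]

theorem Complex.norm_natCast_mul_ofReal_mul_le {n : ℕ} {c : ℝ} (hc : 0 ≤ c) {z : ℂ}
    (hz : ‖z‖ ≤ 1 / n) : ‖(n : ℂ) * (c : ℂ) * z‖ ≤ c := by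
  rw [norm_mul, norm_mul, norm_natCast, norm_real, norm_of_nonneg hc]
  calc (n : ℝ) * c * ‖z‖ ≤ n * c * (1 / n) := by gcongr
    _ = (n * (1 / n)) * c := by ring
    _ ≤ 1 * c := by gcongr; rw [mul_one_div]; exact div_self_le_one _
    _ = c := one_mul c

theorem truncated_a_error_estimate_general (a : ℝ → ℝ)
    (ha1 : ∀ x : ℝ, 0 < x → x ≤ Real.exp (-3) → a x = -x * Real.log (x ^ 2))
    (A : ℂ → ℂ) (hA0 : A 0 = 0)
    (hA : ∀ z : ℂ, z ≠ 0 → A z = (z / (‖z‖ : ℂ)) * (a (‖z‖) : ℂ))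
    (an : ℕ → ℂ → ℂ)
    (han1 : ∀ (n : ℕ) (z : ℂ), 1 / (n : ℝ) ≤ ‖z‖ → an n z = A z)
    (han2 : ∀ (n : ℕ) (z : ℂ), ‖z‖ ≤ 1 / (n : ℝ) →
      an n z = ((n : ℂ) * (a (1 / (n : ℝ)) : ℂ)) * z) :
    ∀ (n : ℕ), 21 ≤ n → ∀ z : ℂ,
      ‖an n z - A z‖ ≤ 4 * Real.log n / n := by
  intro n hn z
  have hlog : 0 ≤ log n := log_natCast_nonneg n
  rcases le_or_gt (1 / (n : ℝ)) ‖z‖ with hz | hz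
  · rw [han1 n z hz, sub_self, norm_zero]
    positivity
  have h1n := one_div_natCast_le_exp_neg_three hn
  have ha : ∀ x : ℝ, 0 < x → x ≤ 1 / n → a x = 2 * negMulLog x := fun x hx hxn ↦ by
    rw [ha1 x hx (hxn.trans h1n), neg_mul_log_sq]
  have han_bound : ‖an n z‖ ≤ 2 * (log n / n) := by
    rw [han2 n z hz.le, ha _ (by positivity) le_rfl, negMulLog_inv_natCast]
    exact Complex.norm_natCast_mul_ofReal_mul_le (by positivity) hz.le
  have hA_bound : ‖A z‖ ≤ 2 * (log n / n) := by
    rcases eq_or_ne z 0 with rfl | hz0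
    · rw [hA0, norm_zero]; positivity
    rw [hA z hz0, Complex.norm_div_norm_mul_ofReal hz0, ha _ (norm_pos_iff.2 hz0) hz.le,
      abs_mul, abs_two, ← negMulLog_inv_natCast]
    gcongr
    exact abs_negMulLog_le (norm_nonneg z) hz.le (h1n.trans (exp_le_exp.2 (by norm_num)))
  calc ‖an n z - A z‖ ≤ ‖an n z‖ + ‖A z‖ := norm_sub_le _ _
    _ ≤ 2 * (log n / n) + 2 * (log n / n) := add_le_add han_bound hA_bound
    _ = 4 * log n / n := by ring

theorem truncated_a_error_estimate (a : ℝ → ℝ) (ha0 : a 0 = 0)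
    (ha1 : ∀ x : ℝ, 0 < x → x ≤ Real.exp (-3) → a x = -x * Real.log (x ^ 2))
    (ha2 : ∀ x : ℝ, Real.exp (-3) ≤ x → a x = 3 * x + 4 * Real.exp (-3) - Real.exp (-6) / x)
    (A : ℂ → ℂ) (hA0 : A 0 = 0)
    (hA : ∀ z : ℂ, z ≠ 0 → A z = (z / (‖z‖ : ℂ)) * (a (‖z‖) : ℂ))
    (an : ℕ → ℂ → ℂ)
    (han1 : ∀ (n : ℕ) (z : ℂ), 1 / (n : ℝ) ≤ ‖z‖ → an n z = A z)
    (han2 : ∀ (n : ℕ) (z : ℂ), ‖z‖ ≤ 1 / (n : ℝ) →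
      an n z = ((n : ℂ) * (a (1 / (n : ℝ)) : ℂ)) * z) :
    ∀ (n : ℕ), 21 ≤ n → ∀ z : ℂ,
      ‖an n z - A z‖ ≤ 4 * Real.log n / n :=
  truncated_a_error_estimate_general a ha1 A hA0 hA an han1 han2
end

section
/- Define the real function b on [0,∞) by b(x) = 0 for 0 ≤ x ≤ e^{−3} and b(x) = x·log(x²) + 3x + 4e^{−3} − e^{−6}/x for x ≥ e^{−3}; extend it to the complex plane by B(z) = (z/|z|)·b(|z|) for z ≠ 0 and B(0) = 0. For a positive integer n define b_n : ℂ → ℂ by b_n(z) = B(z) if |z| ≤ n and b_n(z) = (z/n)·b(n) if |z| ≥ n. Then there exists a constant C > 0, independent of n, such that for every integer n ≥ 2 and every complex number z with |z| ≥ n, |b_n(z) − B(z)| ≤ C·|z|·log(|z|²). -/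
/-!
For `x ≥ 2` the formula defining `b` lies between `0` and `6 x log (x ^ 2)`. Since `log (x ^ 2)`
increases, the linear extension `(r / n) b(n)` obeys the same bound at radius `r ≥ n`, so the
triangle inequality gives the estimate with `C = 12`.
-/

open Real

/-- The formula for `b` on `[e⁻³, ∞)`. -/
noncomputable def bProfile (x : ℝ) : ℝ :=
  x * log (x ^ 2) + 3 * x + 4 * exp (-3) - exp (-6) / x

lemma one_le_log_sq {x : ℝ} (hx : 2 ≤ x) : 1 ≤ log (x ^ 2) := by
  have hlog : log 2 ≤ log x := log_le_log (by norm_num) hx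
  rw [log_pow]
  push_cast
  linarith [log_two_gt_d9]

lemma bProfile_nonneg {x : ℝ} (hx : 2 ≤ x) : 0 ≤ bProfile x := by
  have hL : 0 ≤ x * log (x ^ 2) := mul_nonneg (by linarith) (by linarith [one_le_log_sq hx])
  have hdiv : exp (-6) / x ≤ 1 :=
    (div_le_one (by linarith)).mpr (by linarith [exp_le_one_iff.mpr (by norm_num : (-6 : ℝ) ≤ 0)])
  unfold bProfile
  linarith [exp_pos (-3)]

lemma bProfile_le {x : ℝ} (hx : 2 ≤ x) : bProfile x ≤ 6 * x * log (x ^ 2) := by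
  have hL : x ≤ x * log (x ^ 2) := le_mul_of_one_le_right (by linarith) (one_le_log_sq hx)
  have he : exp (-3) ≤ 1 := exp_le_one_iff.mpr (by norm_num)
  unfold bProfile
  linarith [div_nonneg (exp_pos (-6)).le (by linarith : (0 : ℝ) ≤ x)]

lemma div_mul_bProfile_le {n r : ℝ} (hn : 2 ≤ n) (hnr : n ≤ r) :
    r / n * bProfile n ≤ 6 * r * log (r ^ 2) := by
  have hn0 : 0 < n := by linarith
  calc r / n * bProfile n ≤ r / n * (6 * n * log (n ^ 2)) :=
        mul_le_mul_of_nonneg_left (bProfile_le hn) (div_nonneg (by linarith) hn0.le)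
    _ = 6 * r * log (n ^ 2) := by field_simp
    _ ≤ 6 * r * log (r ^ 2) := by
        gcongr
        linarith

theorem truncated_b_error_estimate_general (b : ℝ → ℝ)
    (hb2 : ∀ x : ℝ, Real.exp (-3) ≤ x →
      b x = x * Real.log (x ^ 2) + 3 * x + 4 * Real.exp (-3) - Real.exp (-6) / x)
    (B : ℂ → ℂ)
    (hB : ∀ z : ℂ, z ≠ 0 → B z = (z / (‖z‖ : ℂ)) * (b ‖z‖ : ℂ))
    (bn : ℕ → ℂ → ℂ)
    (hbn2 : ∀ (n : ℕ) (z : ℂ), (n : ℝ) ≤ ‖z‖ →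
      bn n z = (z / (n : ℂ)) * (b (n : ℝ) : ℂ)) :
    ∃ C : ℝ, 0 < C ∧ ∀ (n : ℕ), 2 ≤ n → ∀ z : ℂ, (n : ℝ) ≤ ‖z‖ →
      ‖bn n z - B z‖ ≤ C * ‖z‖ * Real.log (‖z‖ ^ 2) := by
  have hb : ∀ x : ℝ, 2 ≤ x → b x = bProfile x := fun x hx =>
    hb2 x (by linarith [exp_le_one_iff.mpr (by norm_num : (-3 : ℝ) ≤ 0)])
  refine ⟨12, by norm_num, fun n hn z hz => ?_⟩
  have hn2 : (2 : ℝ) ≤ n := by exact_mod_cast hn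
  have hr : 2 ≤ ‖z‖ := hn2.trans hz
  have hz0 : z ≠ 0 := norm_pos_iff.mp (by linarith)
  rw [hbn2 n z hz, hB z hz0, hb n hn2, hb ‖z‖ hr]
  calc ‖z / n * (bProfile n : ℂ) - z / (‖z‖ : ℂ) * (bProfile ‖z‖ : ℂ)‖
        ≤ ‖z / n * (bProfile n : ℂ)‖ + ‖z / (‖z‖ : ℂ) * (bProfile ‖z‖ : ℂ)‖ := norm_sub_le _ _
    _ = ‖z‖ / n * bProfile n + bProfile ‖z‖ := by
        simp only [norm_mul, norm_div, Complex.norm_real, Complex.norm_natCast, norm_norm,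
          Real.norm_of_nonneg (bProfile_nonneg hn2), Real.norm_of_nonneg (bProfile_nonneg hr),
          div_self (norm_ne_zero_iff.mpr hz0), one_mul]
    _ ≤ 6 * ‖z‖ * log (‖z‖ ^ 2) + 6 * ‖z‖ * log (‖z‖ ^ 2) :=
        add_le_add (div_mul_bProfile_le hn2 hz) (bProfile_le hr)
    _ = 12 * ‖z‖ * log (‖z‖ ^ 2) := by ring

theorem truncated_b_error_estimate (b : ℝ → ℝ)
    (hb1 : ∀ x : ℝ, 0 ≤ x → x ≤ Real.exp (-3) → b x = 0)
    (hb2 : ∀ x : ℝ, Real.exp (-3) ≤ x →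
      b x = x * Real.log (x ^ 2) + 3 * x + 4 * Real.exp (-3) - Real.exp (-6) / x)
    (B : ℂ → ℂ) (hB0 : B 0 = 0)
    (hB : ∀ z : ℂ, z ≠ 0 → B z = (z / (‖z‖ : ℂ)) * (b ‖z‖ : ℂ))
    (bn : ℕ → ℂ → ℂ)
    (hbn1 : ∀ (n : ℕ) (z : ℂ), ‖z‖ ≤ (n : ℝ) → bn n z = B z)
    (hbn2 : ∀ (n : ℕ) (z : ℂ), (n : ℝ) ≤ ‖z‖ →
      bn n z = (z / (n : ℂ)) * (b (n : ℝ) : ℂ)) :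
    ∃ C : ℝ, 0 < C ∧ ∀ (n : ℕ), 2 ≤ n → ∀ z : ℂ, (n : ℝ) ≤ ‖z‖ →
      ‖bn n z - B z‖ ≤ C * ‖z‖ * Real.log (‖z‖ ^ 2) :=
  truncated_b_error_estimate_general b hb2 B hB bn hbn2
end

section
/- Let T > 0, let a ≥ 0, b ≥ 0, and let 0 < δ ≤ 1. Suppose y : [0, T] → ℝ is continuous and nonnegative, y(0) = 0, and y(t) ≤ ∫₀ᵗ (a + b·y(s)^{1−δ}) ds for all t ∈ [0, T]. Then y(t) ≤ ((a·t)^δ + δ·b·t)^{1/δ} for all t ∈ [0, T]. -/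
/-!
Put `F t = ∫₀ᵗ (a + b y^(1-δ))`, so that `y ≤ F` and `a ≤ F' ≤ a + b F^(1-δ)`; in
particular `a t ≤ F t`. For `η > 0` the function `(F t + η)^δ - (a t)^δ - δ b t` has
derivative `δ (F + η)^(δ-1) F' - δ a (a t)^(δ-1) - δ b ≤ 0`, because
`(F + η)^(δ-1) ≤ (a t)^(δ-1)` and `F^(1-δ) (F + η)^(δ-1) ≤ 1`. Hence
`F(t)^δ ≤ η^δ + (a t)^δ + δ b t`; let `η → 0`. The shift by `η` keeps `(F + η)^δ`
differentiable where `F` vanishes.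
-/

open intervalIntegral Set

theorem ContinuousOn.hasDerivAt_integral_of_mem_Ioo {E : Type*} [NormedAddCommGroup E]
    [NormedSpace ℝ E] [CompleteSpace E] {g : ℝ → E} {c d s : ℝ}
    (hg : ContinuousOn g (Icc c d)) (hs : s ∈ Ioo c d) :
    HasDerivAt (fun t => ∫ x in c..t, g x) (g s) s :=
  integral_hasDerivAt_right
    ((hg.mono (Icc_subset_Icc_right hs.2.le)).intervalIntegrable_of_Icc hs.1.le)
    ((hg.mono Ioo_subset_Icc_self).stronglyMeasurableAtFilter isOpen_Ioo s hs)
    (hg.continuousAt (Icc_mem_nhds hs.1 hs.2))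

section SublinearComparison

variable {a b δ T : ℝ} {F F' : ℝ → ℝ}

theorem hasDerivAt_mul_rpow (ha : 0 ≤ a) (hδ : δ ≠ 0) {s : ℝ} (hs : 0 < s) :
    HasDerivAt (fun u => (a * u) ^ δ) (δ * a * (a * s) ^ (δ - 1)) s := by
  rcases ha.eq_or_lt with rfl | ha
  · simpa [Real.zero_rpow hδ] using hasDerivAt_const s (0 : ℝ)
  · convert ((hasDerivAt_id s).const_mul a).rpow_const (p := δ) (Or.inl (mul_pos ha hs).ne')
      using 1 <;> simp only [id, mul_one]
    ring

theorem add_mul_rpow_mul_rpow_sub_one_le (hδ1 : δ ≤ 1) (ha : 0 ≤ a) (hb : 0 ≤ b)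
    {s u v : ℝ} (hs : 0 < s) (hv : 0 ≤ v) (hu : 0 < u) (hasu : a * s ≤ u) (hvu : v ≤ u) :
    (a + b * v ^ (1 - δ)) * u ^ (δ - 1) ≤ a * (a * s) ^ (δ - 1) + b := by
  have hb_part : v ^ (1 - δ) * u ^ (δ - 1) ≤ 1 :=
    calc v ^ (1 - δ) * u ^ (δ - 1) ≤ u ^ (1 - δ) * u ^ (δ - 1) := by gcongr
      _ = 1 := by rw [← Real.rpow_add hu]; norm_num
  have ha_part : a * u ^ (δ - 1) ≤ a * (a * s) ^ (δ - 1) := by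
    rcases ha.eq_or_lt with rfl | ha
    · simp
    · exact mul_le_mul_of_nonneg_left
        (Real.rpow_le_rpow_of_nonpos (mul_pos ha hs) hasu (by linarith)) ha.le
  calc (a + b * v ^ (1 - δ)) * u ^ (δ - 1)
      = a * u ^ (δ - 1) + b * (v ^ (1 - δ) * u ^ (δ - 1)) := by ring
    _ ≤ a * (a * s) ^ (δ - 1) + b * 1 := by gcongr
    _ = a * (a * s) ^ (δ - 1) + b := by rw [mul_one]

theorem mul_le_of_hasDerivAt_ge (hF : ContinuousOn F (Icc 0 T)) (hF0 : F 0 = 0)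
    (hF' : ∀ s ∈ Ioo 0 T, HasDerivAt F (F' s) s) (hF'_ge : ∀ s ∈ Ioo 0 T, a ≤ F' s) :
    ∀ t ∈ Icc 0 T, a * t ≤ F t := by
  intro t ht
  have hgrowth := (convex_Icc 0 T).mul_sub_le_image_sub_of_le_deriv hF
    (fun s hs => by
      rw [interior_Icc] at hs
      exact (hF' s hs).differentiableAt.differentiableWithinAt)
    (fun s hs => by
      rw [interior_Icc] at hs
      exact (hF' s hs).deriv ▸ hF'_ge s hs)
    0 (left_mem_Icc.2 (ht.1.trans ht.2)) t ht ht.1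
  simpa [hF0] using hgrowth

theorem antitoneOn_rpow_add_sub (hδ0 : 0 < δ) (hδ1 : δ ≤ 1) (ha : 0 ≤ a) (hb : 0 ≤ b)
    (hF : ContinuousOn F (Icc 0 T)) (hF' : ∀ s ∈ Ioo 0 T, HasDerivAt F (F' s) s)
    (hF'_le : ∀ s ∈ Ioo 0 T, F' s ≤ a + b * F s ^ (1 - δ))
    (hF_ge : ∀ s ∈ Icc 0 T, a * s ≤ F s) {η : ℝ} (hη : 0 < η) :
    AntitoneOn (fun t => (F t + η) ^ δ - ((a * t) ^ δ + δ * b * t)) (Icc 0 T) := by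
  have hF_nonneg : ∀ s ∈ Icc 0 T, 0 ≤ F s := fun s hs =>
    (mul_nonneg ha hs.1).trans (hF_ge s hs)
  have hpos : ∀ s ∈ Icc 0 T, 0 < F s + η := fun s hs =>
    add_pos_of_nonneg_of_pos (hF_nonneg s hs) hη
  refine antitoneOn_of_hasDerivWithinAt_nonpos (convex_Icc 0 T) ?_ (fun s hs => ?_)
    (f' := fun s => F' s * δ * (F s + η) ^ (δ - 1) - (δ * a * (a * s) ^ (δ - 1) + δ * b))
    (fun s hs => ?_)
  · exact ((hF.add continuousOn_const).rpow_const fun _ _ => Or.inr hδ0.le).sub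
      (((continuousOn_const.mul continuousOn_id).rpow_const fun _ _ => Or.inr hδ0.le).add
        (continuousOn_const.mul continuousOn_id))
  · rw [interior_Icc] at hs ⊢
    have hlinear : HasDerivAt (fun u => δ * b * u) (δ * b) s := by
      simpa using (hasDerivAt_id s).const_mul (δ * b)
    have hpower : HasDerivAt (fun u => (F u + η) ^ δ) (F' s * δ * (F s + η) ^ (δ - 1)) s :=
      ((hF' s hs).add_const η).rpow_const (Or.inl (hpos s (Ioo_subset_Icc_self hs)).ne')
    exact (hpower.sub ((hasDerivAt_mul_rpow ha hδ0.ne' hs.1).add hlinear)).hasDerivWithinAt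
  · rw [interior_Icc] at hs
    have hmem : s ∈ Icc 0 T := Ioo_subset_Icc_self hs
    have hbound : F' s * (F s + η) ^ (δ - 1) ≤ a * (a * s) ^ (δ - 1) + b :=
      calc F' s * (F s + η) ^ (δ - 1) ≤ (a + b * F s ^ (1 - δ)) * (F s + η) ^ (δ - 1) :=
            mul_le_mul_of_nonneg_right (hF'_le s hs) (Real.rpow_nonneg (hpos s hmem).le _)
        _ ≤ a * (a * s) ^ (δ - 1) + b :=
            add_mul_rpow_mul_rpow_sub_one_le hδ1 ha hb hs.1 (hF_nonneg s hmem) (hpos s hmem)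
              ((hF_ge s hmem).trans (by linarith)) (by linarith)
    linarith [mul_le_mul_of_nonneg_left hbound hδ0.le]

theorem rpow_le_of_hasDerivAt_le (hδ0 : 0 < δ) (hδ1 : δ ≤ 1) (ha : 0 ≤ a) (hb : 0 ≤ b)
    (hF : ContinuousOn F (Icc 0 T)) (hF0 : F 0 = 0) (hF' : ∀ s ∈ Ioo 0 T, HasDerivAt F (F' s) s)
    (hF'_le : ∀ s ∈ Ioo 0 T, F' s ≤ a + b * F s ^ (1 - δ))
    (hF_ge : ∀ s ∈ Icc 0 T, a * s ≤ F s) :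
    ∀ t ∈ Icc 0 T, F t ^ δ ≤ (a * t) ^ δ + δ * b * t := by
  intro t ht
  have hFt : 0 ≤ F t := (mul_nonneg ha ht.1).trans (hF_ge t ht)
  refine le_of_forall_pos_le_add fun ε hε => ?_
  obtain ⟨η, hη, hηδ⟩ : ∃ η > 0, η ^ δ = ε :=
    ⟨ε ^ δ⁻¹, Real.rpow_pos_of_pos hε _, Real.rpow_inv_rpow hε.le hδ0.ne'⟩
  have hdecay := antitoneOn_rpow_add_sub hδ0 hδ1 ha hb hF hF' hF'_le hF_ge hη
    (left_mem_Icc.2 (ht.1.trans ht.2)) ht ht.1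
  simp only [hF0, mul_zero, zero_add, Real.zero_rpow hδ0.ne', sub_zero, hηδ] at hdecay
  have hshift : F t ^ δ ≤ (F t + η) ^ δ := by gcongr; linarith
  linarith

theorem le_rpow_of_hasDerivAt_le (hδ0 : 0 < δ) (hδ1 : δ ≤ 1) (ha : 0 ≤ a) (hb : 0 ≤ b)
    (hF : ContinuousOn F (Icc 0 T)) (hF0 : F 0 = 0) (hF' : ∀ s ∈ Ioo 0 T, HasDerivAt F (F' s) s)
    (hF'_ge : ∀ s ∈ Ioo 0 T, a ≤ F' s)
    (hF'_le : ∀ s ∈ Ioo 0 T, F' s ≤ a + b * F s ^ (1 - δ)) :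
    ∀ t ∈ Icc 0 T, F t ≤ ((a * t) ^ δ + δ * b * t) ^ (1 / δ) := by
  intro t ht
  have hF_ge := mul_le_of_hasDerivAt_ge hF hF0 hF' hF'_ge
  have hFt : 0 ≤ F t := (mul_nonneg ha ht.1).trans (hF_ge t ht)
  calc F t = (F t ^ δ) ^ (1 / δ) := by rw [one_div, Real.rpow_rpow_inv hFt hδ0.ne']
    _ ≤ ((a * t) ^ δ + δ * b * t) ^ (1 / δ) := by
      gcongr
      exact rpow_le_of_hasDerivAt_le hδ0 hδ1 ha hb hF hF0 hF' hF'_le hF_ge t ht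

end SublinearComparison

theorem nonlinear_gronwall_general (T a b δ : ℝ) (ha : 0 ≤ a) (hb : 0 ≤ b)
    (hδ0 : 0 < δ) (hδ1 : δ ≤ 1) (y : ℝ → ℝ)
    (hy_cont : ContinuousOn y (Set.Icc 0 T))
    (hy_nonneg : ∀ t ∈ Set.Icc (0 : ℝ) T, 0 ≤ y t)
    (hy : ∀ t ∈ Set.Icc (0 : ℝ) T, y t ≤ ∫ s in (0 : ℝ)..t, (a + b * y s ^ (1 - δ))) :
    ∀ t ∈ Set.Icc (0 : ℝ) T, y t ≤ ((a * t) ^ δ + δ * b * t) ^ (1 / δ) := by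
  intro t ht
  set g : ℝ → ℝ := fun s => a + b * y s ^ (1 - δ)
  set F : ℝ → ℝ := fun t => ∫ s in (0 : ℝ)..t, g s
  have hg : ContinuousOn g (Icc 0 T) := continuousOn_const.add
    (continuousOn_const.mul (hy_cont.rpow_const fun _ _ => Or.inr (by linarith)))
  have hF : ContinuousOn F (Icc 0 T) := by
    rw [← uIcc_of_le (ht.1.trans ht.2)] at hg ⊢
    exact continuousOn_primitive_interval hg.integrableOn_Icc
  refine (hy t ht).trans (le_rpow_of_hasDerivAt_le hδ0 hδ1 ha hb hF integral_same
    (fun s hs => hg.hasDerivAt_integral_of_mem_Ioo hs) (fun s hs => ?_) (fun s hs => ?_) t ht)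
  · have hys := hy_nonneg s (Ioo_subset_Icc_self hs)
    exact le_add_of_nonneg_right (by positivity)
  · show a + b * y s ^ (1 - δ) ≤ a + b * F s ^ (1 - δ)
    have hys := hy_nonneg s (Ioo_subset_Icc_self hs)
    have hyF : y s ≤ F s := hy s (Ioo_subset_Icc_self hs)
    gcongr

theorem nonlinear_gronwall (T a b δ : ℝ) (hT : 0 < T) (ha : 0 ≤ a) (hb : 0 ≤ b)
    (hδ0 : 0 < δ) (hδ1 : δ ≤ 1) (y : ℝ → ℝ)
    (hy_cont : ContinuousOn y (Set.Icc 0 T))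
    (hy_nonneg : ∀ t ∈ Set.Icc (0 : ℝ) T, 0 ≤ y t)
    (hy0 : y 0 = 0)
    (hy : ∀ t ∈ Set.Icc (0 : ℝ) T, y t ≤ ∫ s in (0 : ℝ)..t, (a + b * y s ^ (1 - δ))) :
    ∀ t ∈ Set.Icc (0 : ℝ) T, y t ≤ ((a * t) ^ δ + δ * b * t) ^ (1 / δ) :=
  nonlinear_gronwall_general T a b δ ha hb hδ0 hδ1 y hy_cont hy_nonneg hy
end

section
/- Let C₀ > 0 and let φ : [0,∞) → ℝ satisfy φ(0) = 0 and |φ(s) − φ(t)| ≤ C₀·(1 + K²)·|s − t| for all K > 0 and all 0 ≤ s, t ≤ K. Define g : ℂ → ℂ by g(z) = (z/|z|)·φ(|z|) for z ≠ 0 and g(0) = 0, and for each positive integer m define g_m : ℂ → ℂ by g_m(z) = g(z) if |z| ≤ m and g_m(z) = (z/m)·φ(m) if |z| ≥ m. Then there exists a constant C > 0, depending only on C₀ and not on m, such that for all positive integers m and all complex numbers u and v, |g_m(u) − g_m(v)| ≤ C·(1 + |u|² + |v|²)·|u − v|. -/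
/-!
Both `g` and `g_m` are radial: `g_m(z) = ψ_m(|z|) z` with `ψ_m(s) = φ(min s m) / min s m`. Because
`φ(0) = 0`, the local Lipschitz bound `L(K) = C₀ (1 + K²)` gives `|ψ_m(s)| ≤ L(s)` and
`t |ψ_m(s) - ψ_m(t)| ≤ 2 L(s) (s - t)` for `t ≤ s`; truncation only freezes `ψ_m` beyond `m`, so neither
bound depends on `m`. For `|v| ≤ |u|` the splitting
`ψ(|u|) u - ψ(|v|) v = ψ(|u|) (u - v) + (ψ(|u|) - ψ(|v|)) v` then yields the constant `3 L(|u|)`.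
-/

def HasLocalLipschitzBound (φ L : ℝ → ℝ) : Prop :=
  ∀ K : ℝ, 0 < K → ∀ s t : ℝ, 0 ≤ s → s ≤ K → 0 ≤ t → t ≤ K → |φ s - φ t| ≤ L K * |s - t|

/-- `g_m z = truncRatio φ m ‖z‖ • z`; at `s = 0` the junk value `0 / 0 = 0` matches `g_m 0 = 0`. -/
noncomputable def truncRatio (φ : ℝ → ℝ) (m s : ℝ) : ℝ :=
  φ (min s m) / min s m

namespace HasLocalLipschitzBound

variable {φ L : ℝ → ℝ} {K s t : ℝ}

theorem nonneg (hφ : HasLocalLipschitzBound φ L) (hK : 0 < K) : 0 ≤ L K := by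
  have := (abs_nonneg _).trans (hφ K hK K 0 hK.le le_rfl le_rfl hK.le)
  rw [sub_zero, abs_of_pos hK] at this
  exact nonneg_of_mul_nonneg_left this hK

theorem abs_le (hφ0 : φ 0 = 0) (hφ : HasLocalLipschitzBound φ L) (hK : 0 < K) (ht0 : 0 ≤ t)
    (htK : t ≤ K) : |φ t| ≤ L K * t := by
  simpa [hφ0, abs_of_nonneg ht0] using hφ K hK t 0 ht0 htK le_rfl hK.le

theorem mul_abs_div_sub_div_le (hφ0 : φ 0 = 0) (hφ : HasLocalLipschitzBound φ L) (ht : 0 < t)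
    (hts : t ≤ s) (hsK : s ≤ K) : t * |φ s / s - φ t / t| ≤ 2 * L K * (s - t) := by
  have hs : 0 < s := ht.trans_le hts
  have hK : 0 < K := hs.trans_le hsK
  have hLK := hφ.nonneg hK
  have hdiff : |φ s - φ t| ≤ L K * (s - t) := by
    simpa [abs_of_nonneg (sub_nonneg.2 hts)] using hφ K hK s t hs.le hsK ht.le (hts.trans hsK)
  have hφt : |φ t| ≤ L K * t := hφ.abs_le hφ0 hK ht.le (hts.trans hsK)
  have hsplit : t * (φ s / s - φ t / t) = t / s * (φ s - φ t) - φ t / s * (s - t) := by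
    field_simp
    ring
  calc t * |φ s / s - φ t / t|
      = |t / s * (φ s - φ t) - φ t / s * (s - t)| := by rw [← hsplit, abs_mul, abs_of_pos ht]
    _ ≤ t / s * |φ s - φ t| + |φ t| / s * (s - t) := by
      refine (abs_sub _ _).trans (le_of_eq ?_)
      rw [abs_mul, abs_mul, abs_div, abs_div, abs_of_pos ht, abs_of_pos hs,
        abs_of_nonneg (sub_nonneg.2 hts)]
    _ ≤ 1 * (L K * (s - t)) + L K * t / t * (s - t) := by
      gcongr
      exact (div_le_one hs).2 hts
    _ = 2 * L K * (s - t) := by field_simp; ring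

end HasLocalLipschitzBound

section truncRatio

variable {φ L : ℝ → ℝ} {m s t : ℝ}

theorem abs_truncRatio_le (hφ0 : φ 0 = 0) (hφ : HasLocalLipschitzBound φ L) (hm : 0 < m)
    (hs : 0 < s) : |truncRatio φ m s| ≤ L s := by
  have ht : 0 < min s m := lt_min hs hm
  rw [truncRatio, abs_div, abs_of_pos ht, div_le_iff₀ ht]
  exact hφ.abs_le hφ0 hs ht.le (min_le_left s m)

theorem mul_abs_truncRatio_sub_le (hφ0 : φ 0 = 0) (hφ : HasLocalLipschitzBound φ L)
    (ht0 : 0 ≤ t) (hts : t ≤ s) (hs : 0 < s) :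
    t * |truncRatio φ m s - truncRatio φ m t| ≤ 2 * L s * (s - t) := by
  have hRHS : 0 ≤ 2 * L s * (s - t) :=
    mul_nonneg (mul_nonneg zero_le_two (hφ.nonneg hs)) (sub_nonneg.2 hts)
  rcases ht0.eq_or_lt with rfl | ht
  · simpa using hRHS
  rcases le_total m t with hmt | htm
  · simpa [truncRatio, min_eq_right hmt, min_eq_right (hmt.trans hts)] using hRHS
  -- below `m` the truncation fixes `t` and moves `s` towards `t`
  have hst : t ≤ min s m := le_min hts htm
  calc t * |truncRatio φ m s - truncRatio φ m t|
      = t * |φ (min s m) / min s m - φ t / t| := by rw [truncRatio, truncRatio, min_eq_left htm]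
    _ ≤ 2 * L s * (min s m - t) := hφ.mul_abs_div_sub_div_le hφ0 ht hst (min_le_left s m)
    _ ≤ 2 * L s * (s - t) := by
      have := hφ.nonneg hs
      gcongr
      exact min_le_left s m

end truncRatio

theorem norm_smul_sub_smul_le {E : Type*} [SeminormedAddCommGroup E] [NormedSpace ℝ E]
    (x y : ℝ) (u v : E) : ‖x • u - y • v‖ ≤ |x| * ‖u - v‖ + |x - y| * ‖v‖ := by
  have hsplit : x • u - y • v = x • (u - v) + (x - y) • v := by
    rw [smul_sub, sub_smul]
    abel
  rw [hsplit, ← Real.norm_eq_abs, ← Real.norm_eq_abs, ← norm_smul, ← norm_smul]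
  exact norm_add_le _ _

theorem norm_truncRatio_smul_sub_le {E : Type*} [SeminormedAddCommGroup E] [NormedSpace ℝ E]
    {φ L : ℝ → ℝ} {m : ℝ} (hφ0 : φ 0 = 0) (hφ : HasLocalLipschitzBound φ L) (hm : 0 < m)
    {u v : E} (hvu : ‖v‖ ≤ ‖u‖) (hu : 0 < ‖u‖) :
    ‖truncRatio φ m ‖u‖ • u - truncRatio φ m ‖v‖ • v‖ ≤ 3 * L ‖u‖ * ‖u - v‖ := by
  have hnorms : ‖u‖ - ‖v‖ ≤ ‖u - v‖ := norm_sub_norm_le u v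
  have hL := hφ.nonneg hu
  have hbound := abs_truncRatio_le hφ0 hφ hm hu
  have hdiff := mul_abs_truncRatio_sub_le (m := m) hφ0 hφ (norm_nonneg v) hvu hu
  refine (norm_smul_sub_smul_le _ _ u v).trans ?_
  calc _ ≤ L ‖u‖ * ‖u - v‖ + 2 * L ‖u‖ * (‖u‖ - ‖v‖) := by
        rw [mul_comm _ ‖v‖]
        gcongr
    _ ≤ 3 * L ‖u‖ * ‖u - v‖ := by nlinarith

theorem eq_truncRatio_smul {φ : ℝ → ℝ} {g G : ℂ → ℂ} {m : ℝ} (hg0 : g 0 = 0)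
    (hg : ∀ z : ℂ, z ≠ 0 → g z = z / (‖z‖ : ℂ) * (φ ‖z‖ : ℂ))
    (hG₁ : ∀ z : ℂ, ‖z‖ ≤ m → G z = g z) (hG₂ : ∀ z : ℂ, m ≤ ‖z‖ → G z = z / (m : ℂ) * (φ m : ℂ))
    (z : ℂ) : G z = truncRatio φ m ‖z‖ • z := by
  rw [truncRatio, Complex.real_smul]
  rcases le_total ‖z‖ m with hz | hz
  · rw [hG₁ z hz, min_eq_left hz]
    rcases eq_or_ne z 0 with rfl | hz0
    · simp [hg0]
    · rw [hg z hz0]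
      push_cast
      ring
  · rw [hG₂ z hz, min_eq_right hz]
    push_cast
    ring

theorem truncated_nonlinearity_uniform_lipschitz (C₀ : ℝ) (hC₀ : 0 < C₀) (φ : ℝ → ℝ)
    (hφ0 : φ 0 = 0)
    (hφ : ∀ K : ℝ, 0 < K → ∀ s t : ℝ, 0 ≤ s → s ≤ K → 0 ≤ t → t ≤ K →
      |φ s - φ t| ≤ C₀ * (1 + K ^ 2) * |s - t|)
    (g : ℂ → ℂ) (hg0 : g 0 = 0)
    (hg : ∀ z : ℂ, z ≠ 0 → g z = (z / (‖z‖ : ℂ)) * (φ ‖z‖ : ℂ))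
    (gm : ℕ → ℂ → ℂ)
    (hgm1 : ∀ (m : ℕ) (z : ℂ), ‖z‖ ≤ (m : ℝ) → gm m z = g z)
    (hgm2 : ∀ (m : ℕ) (z : ℂ), (m : ℝ) ≤ ‖z‖ →
      gm m z = (z / (m : ℂ)) * (φ (m : ℝ) : ℂ)) :
    ∃ C : ℝ, 0 < C ∧ ∀ (m : ℕ), 0 < m → ∀ u v : ℂ,
      ‖gm m u - gm m v‖ ≤
        C * (1 + ‖u‖ ^ 2 + ‖v‖ ^ 2) * ‖u - v‖ := by
  refine ⟨3 * C₀, by positivity, fun m hm u v => ?_⟩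
  have hgm : ∀ z, gm m z = truncRatio φ m ‖z‖ • z :=
    eq_truncRatio_smul hg0 hg (hgm1 m) fun z hz => by rw [hgm2 m z hz, Complex.ofReal_natCast]
  wlog hvu : ‖v‖ ≤ ‖u‖ generalizing u v
  · calc ‖gm m u - gm m v‖ = ‖gm m v - gm m u‖ := norm_sub_rev _ _
      _ ≤ 3 * C₀ * (1 + ‖v‖ ^ 2 + ‖u‖ ^ 2) * ‖v - u‖ := this v u (le_of_not_ge hvu)
      _ = 3 * C₀ * (1 + ‖u‖ ^ 2 + ‖v‖ ^ 2) * ‖u - v‖ := by rw [norm_sub_rev]; ring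
  rcases (norm_nonneg u).eq_or_lt with hu | hu
  · have hv : ‖v‖ = 0 := le_antisymm (hvu.trans_eq hu.symm) (norm_nonneg v)
    simp [norm_eq_zero.1 hu.symm, norm_eq_zero.1 hv]
  rw [hgm, hgm]
  calc _ ≤ 3 * (C₀ * (1 + ‖u‖ ^ 2)) * ‖u - v‖ :=
        norm_truncRatio_smul_sub_le hφ0 hφ (Nat.cast_pos.2 hm) hvu hu
    _ ≤ 3 * C₀ * (1 + ‖u‖ ^ 2 + ‖v‖ ^ 2) * ‖u - v‖ := by
      rw [← mul_assoc]
      gcongr _ * ?_ * _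
      linarith [sq_nonneg ‖v‖]
end
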